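/- Let p be a prime, q a positive integer divisible by p, m ≥ 3, 0 ≤ δ < m, and let the functions a^t_σ be defined as in the stated construction. Then for all t₁ ≠ t₂ in {0,…,p^{k+δ}−1} and every σ ∈ {0,…,p^k−1}, the full-length exponential sum vanishes: Σ_{r=0}^{p^m−1} ω_q^{a^{t₁}_{σ,r} − a^{t₂}_{σ,r}} = 0. Consequently, the sum of aperiodic cross-correlations at shift zero vanishes: Σ_{σ=0}^{p^k−1} C(a^{t₁}_σ, a^{t₂}_σ)(0) = 0. -/

import Mathlib

/-!
The difference `a^{t₁}_σ - a^{t₂}_σ` is the linear form `(q/p) Σ_j (t₁_j - t₂_j) x_{v(j)}` in the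
variables, where `x_{v(j)}` is the variable that `t_j` multiplies; the quadratic part, the
`λ`-terms and the `σ`-terms cancel. The positions `v(j)` are distinct, so the exponential sum
over all `r < p^m` factors digit by digit into a product of sums over a single digit. A digit `j₀`
where `t₁` and `t₂` differ contributes the factor `Σ_{b<p} w^b` with `w` a `p`-th root of unity
different from `1`, which vanishes.
-/

open Finset

/-- `i`-th (1-based) base-`p` digit of `r`, i.e. `r_i` where `r = Σ_i r_i p^(i-1)`. -/
def dig (p r i : ℕ) : ℕ := r / p ^ (i - 1) % p

/-- `ω_q^x = exp(2π√-1·x/q)` for `x ∈ ℤ_q`. -/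
noncomputable def eomega (q : ℕ) (x : ZMod q) : ℂ :=
  Complex.exp (2 * Real.pi * Complex.I * (x.val : ℂ) / (q : ℂ))

/-- Aperiodic cross-correlation of two length-`N` `ℤ_q`-valued sequences at integer shift `τ`. -/
noncomputable def ccorr (q N : ℕ) (u v : ℕ → ZMod q) (τ : ℤ) : ℂ :=
  if 0 ≤ τ then ∑ i ∈ Finset.range (N - τ.toNat), eomega q (u i - v (i + τ.toNat))
  else ∑ i ∈ Finset.range (N - (-τ).toNat), eomega q (u (i + (-τ).toNat) - v i)

/-- Aperiodic autocorrelation. -/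
noncomputable def acorr (q N : ℕ) (u : ℕ → ZMod q) (τ : ℤ) : ℂ := ccorr q N u u τ

/-- Entry `a^t_{σ,r}` of the construction: with `(r_1,…,r_m)` the `p`-ary digits of `r`,
`a^t_σ(r) = (q/p) Σ_β Σ_γ r_{π_β(γ)} r_{π_β(γ+1)} + Σ_l λ_l r_l + λ_0
 + (q/p)(Σ_β σ_β r_{π_β(1)} + Σ_β t_β r_{π_β(m_β)} + Σ_β t_{k+β} r_{m-δ+β})`. -/
def aseq (p q m δ k : ℕ) (mcard : ℕ → ℕ) (pmap : ℕ → ℕ → ℕ) (lam : ℕ → ZMod q)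
    (t σ r : ℕ) : ZMod q :=
  (((q / p) * ∑ β ∈ Finset.Icc 1 k, ∑ γ ∈ Finset.Icc 1 (mcard β - 1),
      dig p r (pmap β γ) * dig p r (pmap β (γ + 1)) : ℕ) : ZMod q)
  + ∑ l ∈ Finset.Icc 1 m, lam l * (dig p r l : ZMod q) + lam 0
  + (((q / p) * (∑ β ∈ Finset.Icc 1 k, dig p σ β * dig p r (pmap β 1)
      + ∑ β ∈ Finset.Icc 1 k, dig p t β * dig p r (pmap β (mcard β))
      + ∑ β ∈ Finset.Icc 1 δ, dig p t (k + β) * dig p r (m - δ + β)) : ℕ) : ZMod q)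

lemma exists_dig_ne {p n a b : ℕ} (ha : a < p ^ n) (hb : b < p ^ n) (hab : a ≠ b) :
    ∃ j ∈ Icc 1 n, dig p a j ≠ dig p b j := by
  by_contra! h
  have : finFunctionFinEquiv.symm (⟨a, ha⟩ : Fin (p ^ n)) = finFunctionFinEquiv.symm ⟨b, hb⟩ := by
    ext i
    simpa [finFunctionFinEquiv_symm_apply_val, dig] using h (i + 1) (by simp)
  exact hab (congrArg Fin.val (finFunctionFinEquiv.symm.injective this))

lemma sum_range_pow_prod_dig {M : Type*} [CommSemiring M] (p m : ℕ) (f : ℕ → ℕ → M) :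
    ∑ r ∈ range (p ^ m), ∏ i ∈ Icc 1 m, f i (dig p r i) = ∏ i ∈ Icc 1 m, ∑ b ∈ range p, f i b := by
  have hIcc : ∀ g : ℕ → M, ∏ i ∈ Icc 1 m, g i = ∏ i : Fin m, g (i + 1) := fun g => by
    rw [← Ico_add_one_right_eq_Icc, prod_Ico_eq_prod_range, Nat.add_sub_cancel,
      ← Fin.prod_univ_eq_prod_range]
    simp only [add_comm]
  have hdig : ∀ (x : Fin m → Fin p) (i : Fin m), dig p (finFunctionFinEquiv x) (i + 1) = x i :=
    fun x i => by
      simpa [dig] using (finFunctionFinEquiv_symm_apply_val (finFunctionFinEquiv x) i).symm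
  calc ∑ r ∈ range (p ^ m), ∏ i ∈ Icc 1 m, f i (dig p r i)
      = ∑ x : Fin m → Fin p, ∏ i : Fin m, f (i + 1) (x i) := by
        rw [← Fin.sum_univ_eq_sum_range, ← finFunctionFinEquiv.sum_comp]
        simp only [hIcc, hdig]
    _ = ∏ i ∈ Icc 1 m, ∑ b ∈ range p, f i b := by
        rw [← Fintype.prod_sum (fun (i : Fin m) (b : Fin p) => f (i + 1) b), hIcc]
        simp only [Fin.sum_univ_eq_sum_range (f _)]

lemma sum_range_pow_prod_dig_eq_zero {ι M : Type*} [CommSemiring M] {p m : ℕ} {J : Finset ι}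
    {P : ι → ℕ} (hP : ∀ j ∈ J, P j ∈ Icc 1 m) (g : ι → ℕ → M) {j₀ : ι} (hj₀ : j₀ ∈ J)
    (huniq : ∀ j ∈ J, P j = P j₀ → j = j₀) (hg : ∑ b ∈ range p, g j₀ b = 0) :
    ∑ r ∈ range (p ^ m), ∏ j ∈ J, g j (dig p r (P j)) = 0 := by
  have hfiber : ∀ r, ∏ j ∈ J, g j (dig p r (P j))
      = ∏ i ∈ Icc 1 m, ∏ j ∈ J with P j = i, g j (dig p r i) := fun r => by
    rw [← prod_fiberwise_of_maps_to hP]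
    refine prod_congr rfl fun i _ => prod_congr rfl fun j hj => ?_
    rw [(mem_filter.mp hj).2]
  rw [sum_congr rfl fun r _ => hfiber r,
    sum_range_pow_prod_dig p m fun i b => ∏ j ∈ J with P j = i, g j b]
  refine prod_eq_zero (hP j₀ hj₀) ?_
  rw [← hg]
  refine sum_congr rfl fun b _ => prod_eq_single_of_mem j₀ (by simp [hj₀]) fun j hj hne => ?_
  exact absurd (huniq j (mem_filter.mp hj).1 (mem_filter.mp hj).2) hne

lemma AddChar.map_finset_sum {ι A M : Type*} [AddCommMonoid A] [CommMonoid M]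
    (ψ : AddChar A M) (s : Finset ι) (f : ι → A) : ψ (∑ i ∈ s, f i) = ∏ i ∈ s, ψ (f i) := by
  induction s using Finset.cons_induction with
  | empty => simp
  | cons i s hi ih => rw [sum_cons, prod_cons, AddChar.map_add_eq_mul, ih]

lemma eomega_eq_stdAddChar {q : ℕ} [NeZero q] (x : ZMod q) : eomega q x = ZMod.stdAddChar x := by
  rw [ZMod.stdAddChar_apply, ZMod.toCircle_apply, eomega]

lemma geom_sum_stdAddChar_eq_zero {N n : ℕ} [NeZero N] {x : ZMod N} (hx : x ≠ 0) (hnx : n • x = 0) :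
    ∑ b ∈ range n, ZMod.stdAddChar x ^ b = 0 := by
  have hne : ZMod.stdAddChar x ≠ 1 := by
    rwa [← (ZMod.stdAddChar (N := N)).map_zero_eq_one, ZMod.injective_stdAddChar.ne_iff]
  rw [geom_sum_eq hne, ← AddChar.map_nsmul_eq_pow, hnx, AddChar.map_zero_eq_one, sub_self,
    zero_div]

lemma intCast_div_mul_ne_zero {p q : ℕ} (hq : 0 < q) (hpq : p ∣ q) {c : ℤ} (hc : ¬ (p : ℤ) ∣ c) :
    ((((q / p : ℕ) : ℤ) * c : ℤ) : ZMod q) ≠ 0 := by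
  obtain ⟨s, rfl⟩ := hpq
  have hp : 0 < p := Nat.pos_of_mul_pos_right hq
  have hs : (s : ℤ) ≠ 0 := by exact_mod_cast (Nat.pos_of_mul_pos_left hq).ne'
  rw [Nat.mul_div_cancel_left s hp, Ne, ZMod.intCast_zmod_eq_zero_iff_dvd, Nat.cast_mul,
    mul_comm (p : ℤ), mul_dvd_mul_iff_left hs]
  exact hc

lemma nsmul_intCast_div_mul {p q : ℕ} (hpq : p ∣ q) (c : ℤ) :
    p • ((((q / p : ℕ) : ℤ) * c : ℤ) : ZMod q) = 0 := by
  have hq : (p : ZMod q) * ((q / p : ℕ) : ZMod q) = 0 := by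
    rw [← Nat.cast_mul, Nat.mul_div_cancel' hpq, ZMod.natCast_self]
  rw [nsmul_eq_mul, Int.cast_mul, Int.cast_natCast (R := ZMod q), ← mul_assoc, hq, zero_mul]

lemma not_dvd_sub_of_ne_of_lt {p a b : ℕ} (hab : a ≠ b) (ha : a < p) (hb : b < p) :
    ¬ (p : ℤ) ∣ (a : ℤ) - b := fun h =>
  hab ((Nat.modEq_iff_dvd.mpr h).eq_of_lt_of_lt hb ha).symm

lemma ccorr_zero (q N : ℕ) (u v : ℕ → ZMod q) :
    ccorr q N u v 0 = ∑ i ∈ range N, eomega q (u i - v i) := by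
  simp [ccorr]

section Construction

variable (m δ k : ℕ) (mcard : ℕ → ℕ) (pmap : ℕ → ℕ → ℕ)

/-- The index `v(j)` of the variable that the digit `t_j` multiplies in `a^t_σ`. -/
def tVar (j : ℕ) : ℕ := if j ≤ k then pmap j (mcard j) else m - δ + (j - k)

variable {m δ k mcard pmap}

lemma sum_Icc_add {M : Type*} [AddCommMonoid M] (f : ℕ → M) (k δ : ℕ) :
    ∑ j ∈ Icc 1 (k + δ), f j = ∑ j ∈ Icc 1 k, f j + ∑ j ∈ Icc 1 δ, f (k + j) := by
  induction δ with
  | zero => simp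
  | succ δ ih =>
    rw [← add_assoc, sum_Icc_succ_top (by omega), ih, sum_Icc_succ_top (by omega), add_assoc,
      add_assoc]

lemma sum_dig_mul_tVar (p t r : ℕ) :
    ∑ β ∈ Icc 1 k, dig p t β * dig p r (pmap β (mcard β))
      + ∑ β ∈ Icc 1 δ, dig p t (k + β) * dig p r (m - δ + β)
      = ∑ j ∈ Icc 1 (k + δ), dig p t j * dig p r (tVar m δ k mcard pmap j) := by
  rw [sum_Icc_add]
  congr 1
  · exact sum_congr rfl fun j hj => by simp [tVar, (mem_Icc.mp hj).2]
  · exact sum_congr rfl fun j hj => by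
      simp [tVar, show ¬ k + j ≤ k by have := (mem_Icc.mp hj).1; omega]

lemma aseq_sub_aseq (p q : ℕ) (lam : ℕ → ZMod q) (t₁ t₂ σ r : ℕ) :
    aseq p q m δ k mcard pmap lam t₁ σ r - aseq p q m δ k mcard pmap lam t₂ σ r
      = ∑ j ∈ Icc 1 (k + δ), dig p r (tVar m δ k mcard pmap j)
          • ((((q / p : ℕ) : ℤ) * ((dig p t₁ j : ℤ) - dig p t₂ j) : ℤ) : ZMod q) := by
  simp only [aseq, add_assoc, sum_dig_mul_tVar, nsmul_eq_mul]
  generalize q / p = s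
  push_cast
  have hterm : ∀ a b c : ℕ, (a : ZMod q) * (s * ((b : ZMod q) - c)) = s * (b * a) - s * (c * a) :=
    fun a b c => by ring
  simp only [hterm, sum_sub_distrib, ← mul_sum]
  ring

variable (hmcard : ∀ β ∈ Icc 1 k, 1 ≤ mcard β)
  (hmaps : ∀ β ∈ Icc 1 k, ∀ γ ∈ Icc 1 (mcard β), pmap β γ ∈ Icc 1 (m - δ))
include hmcard hmaps

lemma pmap_last_mem {β : ℕ} (hβ : β ∈ Icc 1 k) : pmap β (mcard β) ∈ Icc 1 (m - δ) :=
  hmaps β hβ _ (mem_Icc.mpr ⟨hmcard β hβ, le_rfl⟩)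

lemma tVar_mem_Icc (hδ : δ ≤ m) {j : ℕ} (hj : j ∈ Icc 1 (k + δ)) :
    tVar m δ k mcard pmap j ∈ Icc 1 m := by
  rw [mem_Icc] at hj ⊢
  unfold tVar
  split_ifs with hjk
  · have := mem_Icc.mp (pmap_last_mem hmcard hmaps (mem_Icc.mpr ⟨hj.1, hjk⟩))
    omega
  · omega

lemma injOn_tVar
    (hpart : ∀ l ∈ Icc 1 (m - δ), ∃! bg : ℕ × ℕ,
      bg.1 ∈ Icc 1 k ∧ bg.2 ∈ Icc 1 (mcard bg.1) ∧ pmap bg.1 bg.2 = l) :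
    Set.InjOn (tVar m δ k mcard pmap) (Icc 1 (k + δ)) := by
  intro i hi j hj hij
  have hi := mem_Icc.mp hi
  have hj := mem_Icc.mp hj
  have path_mem : ∀ β, 1 ≤ β → β ≤ k → β ∈ Icc 1 k ∧ mcard β ∈ Icc 1 (mcard β) := fun β h1 h2 =>
    ⟨mem_Icc.mpr ⟨h1, h2⟩, mem_Icc.mpr ⟨hmcard β (mem_Icc.mpr ⟨h1, h2⟩), le_rfl⟩⟩
  have last_le : ∀ β, 1 ≤ β → β ≤ k → pmap β (mcard β) ≤ m - δ := fun β h1 h2 =>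
    (mem_Icc.mp (pmap_last_mem hmcard hmaps (mem_Icc.mpr ⟨h1, h2⟩))).2
  unfold tVar at hij
  split_ifs at hij with hik hjk hjk
  · have hi' := path_mem i hi.1 hik
    have hj' := path_mem j hj.1 hjk
    exact congrArg Prod.fst <| (hpart _ (pmap_last_mem hmcard hmaps hj'.1)).unique
      (y₁ := (i, mcard i)) (y₂ := (j, mcard j)) ⟨hi'.1, hi'.2, hij⟩ ⟨hj'.1, hj'.2, rfl⟩
  · have := last_le i hi.1 hik; omega
  · have := last_le j hj.1 hjk; omega
  · omega

end Construction

lemma sum_eomega_aseq_sub_aseq (p q m δ k : ℕ) (hq : 0 < q) (hpq : p ∣ q) (hδ : δ ≤ m)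
    (mcard : ℕ → ℕ) (pmap : ℕ → ℕ → ℕ) (lam : ℕ → ZMod q)
    (hmcard : ∀ β ∈ Icc 1 k, 1 ≤ mcard β)
    (hmaps : ∀ β ∈ Icc 1 k, ∀ γ ∈ Icc 1 (mcard β), pmap β γ ∈ Icc 1 (m - δ))
    (hpart : ∀ l ∈ Icc 1 (m - δ), ∃! bg : ℕ × ℕ,
      bg.1 ∈ Icc 1 k ∧ bg.2 ∈ Icc 1 (mcard bg.1) ∧ pmap bg.1 bg.2 = l)
    {t₁ t₂ : ℕ} (ht₁ : t₁ < p ^ (k + δ)) (ht₂ : t₂ < p ^ (k + δ)) (hne : t₁ ≠ t₂) (σ : ℕ) :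
    ∑ r ∈ range (p ^ m),
      eomega q (aseq p q m δ k mcard pmap lam t₁ σ r - aseq p q m δ k mcard pmap lam t₂ σ r)
      = 0 := by
  have : NeZero q := ⟨hq.ne'⟩
  have hp : 0 < p := Nat.pos_of_dvd_of_pos hpq hq
  set w : ℕ → ℂ := fun j =>
    ZMod.stdAddChar ((((q / p : ℕ) : ℤ) * ((dig p t₁ j : ℤ) - dig p t₂ j) : ℤ) : ZMod q)
  obtain ⟨j₀, hj₀, hdig⟩ := exists_dig_ne ht₁ ht₂ hne
  have hw : ∑ b ∈ range p, w j₀ ^ b = 0 :=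
    geom_sum_stdAddChar_eq_zero (intCast_div_mul_ne_zero hq hpq
      (not_dvd_sub_of_ne_of_lt hdig (Nat.mod_lt _ hp) (Nat.mod_lt _ hp)))
      (nsmul_intCast_div_mul hpq _)
  simp only [aseq_sub_aseq, eomega_eq_stdAddChar, AddChar.map_finset_sum,
    AddChar.map_nsmul_eq_pow]
  exact sum_range_pow_prod_dig_eq_zero (fun j hj => tVar_mem_Icc hmcard hmaps hδ hj)
    (fun j b => w j ^ b) hj₀
    (fun j hj h => injOn_tVar hmcard hmaps hpart hj hj₀ h) hw

theorem szccs_zero_shift_ccf_general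
    (p q m δ k : ℕ) (hq : 0 < q) (hpq : p ∣ q) (hδ : δ < m)
    (mcard : ℕ → ℕ) (pmap : ℕ → ℕ → ℕ) (lam : ℕ → ZMod q)
    (hmcard : ∀ β ∈ Finset.Icc 1 k, 1 ≤ mcard β)
    (hmaps : ∀ β ∈ Finset.Icc 1 k, ∀ γ ∈ Finset.Icc 1 (mcard β),
      pmap β γ ∈ Finset.Icc 1 (m - δ))
    (hpart : ∀ l ∈ Finset.Icc 1 (m - δ), ∃! bg : ℕ × ℕ,
      bg.1 ∈ Finset.Icc 1 k ∧ bg.2 ∈ Finset.Icc 1 (mcard bg.1) ∧ pmap bg.1 bg.2 = l)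
    (t₁ t₂ : ℕ) (ht₁ : t₁ < p ^ (k + δ)) (ht₂ : t₂ < p ^ (k + δ)) (hne : t₁ ≠ t₂) :
    (∀ σ < p ^ k,
      ∑ r ∈ Finset.range (p ^ m),
        eomega q (aseq p q m δ k mcard pmap lam t₁ σ r
          - aseq p q m δ k mcard pmap lam t₂ σ r) = 0) ∧
    ∑ σ ∈ Finset.range (p ^ k),
      ccorr q (p ^ m) (aseq p q m δ k mcard pmap lam t₁ σ)
        (aseq p q m δ k mcard pmap lam t₂ σ) 0 = 0 := by
  have key := sum_eomega_aseq_sub_aseq p q m δ k hq hpq hδ.le mcard pmap lam hmcard hmaps hpart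
    ht₁ ht₂ hne
  exact ⟨fun σ _ => key σ, sum_eq_zero fun σ _ => by rw [ccorr_zero]; exact key σ⟩

/-- for `t₁ ≠ t₂`, the full-length exponential sum
`Σ_{r=0}^{p^m-1} ω_q^{a^{t₁}_{σ,r} - a^{t₂}_{σ,r}}` vanishes for every `σ`, and
consequently `Σ_{σ=0}^{p^k-1} C(a^{t₁}_σ, a^{t₂}_σ)(0) = 0`. -/
theorem szccs_zero_shift_ccf
    (p q m δ k : ℕ) (hp : p.Prime) (hq : 0 < q) (hpq : p ∣ q)
    (hm : 3 ≤ m) (hδ : δ < m) (hk1 : 1 ≤ k) (hk2 : k ≤ m - δ)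
    (mcard : ℕ → ℕ) (pmap : ℕ → ℕ → ℕ) (lam : ℕ → ZMod q)
    (hmcard : ∀ β ∈ Finset.Icc 1 k, 1 ≤ mcard β)
    (hmaps : ∀ β ∈ Finset.Icc 1 k, ∀ γ ∈ Finset.Icc 1 (mcard β),
      pmap β γ ∈ Finset.Icc 1 (m - δ))
    (hpart : ∀ l ∈ Finset.Icc 1 (m - δ), ∃! bg : ℕ × ℕ,
      bg.1 ∈ Finset.Icc 1 k ∧ bg.2 ∈ Finset.Icc 1 (mcard bg.1) ∧ pmap bg.1 bg.2 = l)
    (t₁ t₂ : ℕ) (ht₁ : t₁ < p ^ (k + δ)) (ht₂ : t₂ < p ^ (k + δ)) (hne : t₁ ≠ t₂) :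
    (∀ σ < p ^ k,
      ∑ r ∈ Finset.range (p ^ m),
        eomega q (aseq p q m δ k mcard pmap lam t₁ σ r
          - aseq p q m δ k mcard pmap lam t₂ σ r) = 0) ∧
    ∑ σ ∈ Finset.range (p ^ k),
      ccorr q (p ^ m) (aseq p q m δ k mcard pmap lam t₁ σ)
        (aseq p q m δ k mcard pmap lam t₂ σ) 0 = 0 :=
  szccs_zero_shift_ccf_general p q m δ k hq hpq hδ mcard pmap lam hmcard hmaps hpart t₁ t₂ ht₁ ht₂
    hne
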